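/- arXiv:math-ph/0701002 — 3 statements merged into one kernel-verified Lean document; each statement's English description precedes it below -/
import Mathlib

section
/- For every n ≥ 1, the double sum Σ_{P partition of [n]} Σ_{P' partition of the set of blocks of P} (|P'| - 1)! is at most n! · e^{n+1}. -/
/-!
Removing the block that contains a fixed element `x` of `s` gives the recursion
`∑_{P ⊢ s} f(|P|) = ∑_{B ⊆ s - x} ∑_{R ⊢ s \ (B ∪ {x})} f(|R| + 1)`. Along it one proves by strong
induction that `∑_{P ⊢ s} (|P| + c)! t^|P| ≤ (|s| + c)! A^|s|` as soon as `t e^{1/A} ≤ A`: the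
binomial sum over `B` is controlled by `C(m, i) (m - i + c)! i! ≤ (m + c)!` and
`∑ A^{-i} / i! ≤ e^{1/A}`. After `(k - 1)! ≤ k!`, the inner sum is bounded with `(t, A) = (1, 9/5)`
and then the outer sum with `(t, A) = (9/5, e)`, which gives `n! e^n`.
-/

open Finset Nat Real

theorem Nat.choose_mul_factorial_mul_factorial_le (m c i : ℕ) :
    m.choose i * (m - i + c)! * i ! ≤ (m + c)! := by
  rcases le_or_gt i m with him | hmi
  · calc m.choose i * (m - i + c)! * i !
        ≤ (m + c).choose i * i ! * (m + c - i)! := by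
          rw [mul_right_comm, show m - i + c = m + c - i by omega]
          gcongr
          omega
      _ = (m + c)! := choose_mul_factorial_mul_factorial (by omega)
  · simp [choose_eq_zero_of_lt hmi]

theorem Real.sum_choose_mul_factorial_mul_pow_le {A : ℝ} (hA : 0 < A) (m c : ℕ) :
    ∑ i ∈ range (m + 1), (m.choose i : ℝ) * (m - i + c)! * A ^ (m - i) ≤
      (m + c)! * A ^ m * exp A⁻¹ := by
  calc ∑ i ∈ range (m + 1), (m.choose i : ℝ) * (m - i + c)! * A ^ (m - i)
      ≤ ∑ i ∈ range (m + 1), (m + c)! * A ^ m * (A⁻¹ ^ i / i !) := by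
        refine sum_le_sum fun i hi => ?_
        have him : i ≤ m := Nat.lt_succ_iff.1 (mem_range.1 hi)
        have hpow : A ^ (m - i) = A ^ m * A⁻¹ ^ i := by
          rw [pow_sub₀ A hA.ne' him, inv_pow]
        have hnat : (m.choose i : ℝ) * (m - i + c)! * i ! ≤ (m + c)! := by
          exact_mod_cast Nat.choose_mul_factorial_mul_factorial_le m c i
        rw [hpow, div_eq_mul_inv]
        calc (m.choose i : ℝ) * (m - i + c)! * (A ^ m * A⁻¹ ^ i)
            = (m.choose i : ℝ) * (m - i + c)! * i ! * (A ^ m * A⁻¹ ^ i * (i ! : ℝ)⁻¹) := by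
              field_simp
          _ ≤ (m + c)! * (A ^ m * A⁻¹ ^ i * (i ! : ℝ)⁻¹) := by gcongr
          _ = (m + c)! * A ^ m * (A⁻¹ ^ i * (i ! : ℝ)⁻¹) := by ring
    _ ≤ (m + c)! * A ^ m * exp A⁻¹ := by
        rw [← mul_sum]
        gcongr
        exact sum_le_exp_of_nonneg (inv_nonneg.2 hA.le) _

theorem Real.exp_inv_nine_fifths_le : exp (9 / 5 : ℝ)⁻¹ ≤ 9 / 5 := by
  refine le_of_pow_le_pow_left₀ (n := 9) (by norm_num) (by norm_num) ?_
  calc exp (9 / 5 : ℝ)⁻¹ ^ 9 = exp 1 ^ 5 := by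
        rw [← exp_nat_mul, ← exp_nat_mul]; norm_num
    _ ≤ 2.7182818286 ^ 5 := by gcongr; exact exp_one_lt_d9.le
    _ ≤ (9 / 5) ^ 9 := by norm_num

theorem Real.nine_fifths_mul_exp_inv_exp_one_le : 9 / 5 * exp (exp 1)⁻¹ ≤ exp 1 := by
  have hinv : (exp 1)⁻¹ ≤ 3 / 8 := by
    rw [inv_le_comm₀ (exp_pos 1) (by norm_num)]
    linarith [exp_one_gt_d9]
  have hpow : (9 / 5 : ℝ) ^ 8 ≤ exp 1 ^ 5 :=
    calc (9 / 5 : ℝ) ^ 8 ≤ 2.7182818283 ^ 5 := by norm_num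
      _ ≤ exp 1 ^ 5 := by gcongr; exact exp_one_gt_d9.le
  calc 9 / 5 * exp (exp 1)⁻¹ ≤ 9 / 5 * exp (3 / 8) := by gcongr
    _ ≤ exp 1 := by
      refine le_of_pow_le_pow_left₀ (n := 8) (by norm_num) (exp_pos 1).le ?_
      calc (9 / 5 * exp (3 / 8)) ^ 8 = (9 / 5) ^ 8 * exp 1 ^ 3 := by
            rw [mul_pow, ← exp_nat_mul, ← exp_nat_mul]; norm_num
        _ ≤ exp 1 ^ 5 * exp 1 ^ 3 := by gcongr
        _ = exp 1 ^ 8 := by ring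

namespace Finpartition

theorem sup_erase_eq_sdiff {α : Type*} [GeneralizedBooleanAlgebra α] [DecidableEq α] {a t : α}
    (P : Finpartition a) (ht : t ∈ P.parts) : (P.parts.erase t).sup id = a \ t := by
  have hdisj : Disjoint t ((P.parts.erase t).sup id) :=
    (supIndep_iff_disjoint_erase.1 P.supIndep) t ht
  conv_rhs => rw [← P.sup_parts, ← insert_erase ht, sup_insert, id, sup_sdiff_left_self]
  exact hdisj.symm.sdiff_eq_left.symm

variable {α M : Type*} [DecidableEq α] [AddCommMonoid M]

theorem sum_filter_mem_parts {s C : Finset α} (hCs : C ⊆ s) (hC : C.Nonempty) (f : ℕ → M) :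
    ∑ P : Finpartition s with C ∈ P.parts, f #P.parts =
      ∑ R : Finpartition (s \ C), f (#R.parts + 1) := by
  refine sum_bij'
    (fun P hP => P.ofSubset (erase_subset C P.parts) (P.sup_erase_eq_sdiff (mem_filter.1 hP).2))
    (fun R _ => R.extend hC.ne_empty disjoint_sdiff_self_left (sdiff_sup_cancel hCs))
    (fun _ _ => mem_univ _) (fun R _ => by simp [extend]) (fun P hP => ?_) (fun R _ => ?_)
    (fun P hP => ?_)
  · ext1
    exact insert_erase (mem_filter.1 hP).2
  · ext1
    exact erase_insert fun h =>
      hC.ne_empty ((disjoint_sdiff_self_left (y := s)).eq_bot_of_ge (R.le h))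
  · simp only [ofSubset_parts]
    rw [card_erase_add_one (mem_filter.1 hP).2]

theorem sum_eq_sum_powerset_erase {s : Finset α} {x : α} (hx : x ∈ s) (f : ℕ → M) :
    ∑ P : Finpartition s, f #P.parts =
      ∑ B ∈ (s.erase x).powerset, ∑ R : Finpartition (s \ insert x B), f (#R.parts + 1) := by
  rw [← sum_fiberwise_of_maps_to (g := fun P : Finpartition s => (P.part x).erase x)
    (t := (s.erase x).powerset) fun P _ => mem_powerset.2 (erase_subset_erase x (P.part_subset x))]
  refine sum_congr rfl fun B hB => ?_
  have hxB : x ∉ B := fun h => (mem_erase.1 (mem_powerset.1 hB h)).1 rfl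
  have hBs : insert x B ⊆ s := insert_subset hx ((mem_powerset.1 hB).trans (erase_subset x s))
  rw [← sum_filter_mem_parts hBs (insert_nonempty x B)]
  refine sum_congr (filter_congr fun P _ => ?_) fun _ _ => rfl
  rw [erase_eq_iff_eq_insert (P.mem_part_self.2 hx) hxB]
  exact ⟨fun h => h ▸ P.part_mem.2 hx, fun h => P.part_eq_of_mem h (mem_insert_self x B)⟩

theorem sum_factorial_mul_pow_le {t A : ℝ} (ht : 0 ≤ t) (hA : 0 < A) (htA : t * exp A⁻¹ ≤ A)
    (s : Finset α) (c : ℕ) :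
    ∑ P : Finpartition s, ((#P.parts + c)! : ℝ) * t ^ #P.parts ≤ (#s + c)! * A ^ #s := by
  induction s using Finset.strongInduction generalizing c with
  | H s ih =>
  rcases s.eq_empty_or_nonempty with rfl | ⟨x, hx⟩
  · rw [← bot_eq_empty, Fintype.sum_unique, parts_eq_empty_iff.2 rfl]
    simp
  set m := #(s.erase x)
  have hs : #s = m + 1 := (card_erase_add_one hx).symm
  have hBs : ∀ B ∈ (s.erase x).powerset, insert x B ⊆ s := fun B hB =>
    (insert_subset_insert x (mem_powerset.1 hB)).trans (insert_erase hx).subset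
  have hcard : ∀ B ∈ (s.erase x).powerset, #(s \ insert x B) = m - #B := fun B hB => by
    have hxB : x ∉ B := fun h => (mem_erase.1 (mem_powerset.1 hB h)).1 rfl
    rw [card_sdiff_of_subset (hBs B hB), card_insert_of_notMem hxB, hs]
    omega
  calc ∑ P : Finpartition s, ((#P.parts + c)! : ℝ) * t ^ #P.parts
      = ∑ B ∈ (s.erase x).powerset, t * ∑ R : Finpartition (s \ insert x B),
          ((#R.parts + (c + 1))! : ℝ) * t ^ #R.parts := by
        rw [sum_eq_sum_powerset_erase hx fun k => ((k + c)! : ℝ) * t ^ k]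
        refine sum_congr rfl fun B _ => ?_
        rw [mul_sum]
        refine sum_congr rfl fun R _ => ?_
        rw [pow_succ, add_assoc, add_comm 1 c]
        ring
    _ ≤ ∑ B ∈ (s.erase x).powerset, t * ((m - #B + (c + 1))! * A ^ (m - #B)) := by
        refine sum_le_sum fun B hB => ?_
        rw [← hcard B hB]
        gcongr
        exact ih _ (sdiff_ssubset (hBs B hB) (insert_nonempty x B)) _
    _ = t * ∑ i ∈ range (m + 1), (m.choose i : ℝ) * (m - i + (c + 1))! * A ^ (m - i) := by
        rw [sum_powerset_apply_card fun i => t * ((m - i + (c + 1))! * A ^ (m - i)), mul_sum]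
        refine sum_congr rfl fun i _ => ?_
        rw [nsmul_eq_mul]
        ring
    _ ≤ t * ((m + (c + 1))! * A ^ m * exp A⁻¹) := by
        gcongr
        exact sum_choose_mul_factorial_mul_pow_le hA m (c + 1)
    _ = (m + (c + 1))! * A ^ m * (t * exp A⁻¹) := by ring
    _ ≤ (m + (c + 1))! * A ^ m * A := by gcongr
    _ = (#s + c)! * A ^ #s := by
        rw [hs, pow_succ, show m + 1 + c = m + (c + 1) by omega]
        ring

end Finpartition

theorem double_partition_sum_le_general
    (n : ℕ) :
    (∑ P : Finpartition (Finset.range n),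
       ∑ P' : Finpartition P.parts,
         ((P'.parts.card - 1).factorial : ℝ)) ≤
      (n.factorial : ℝ) * Real.exp (n + 1) := by
  have inner (P : Finpartition (range n)) :
      ∑ P' : Finpartition P.parts, ((#P'.parts - 1)! : ℝ) ≤
        (#P.parts + 0)! * (9 / 5) ^ #P.parts :=
    calc ∑ P' : Finpartition P.parts, ((#P'.parts - 1)! : ℝ)
        ≤ ∑ P' : Finpartition P.parts, ((#P'.parts + 0)! : ℝ) * 1 ^ #P'.parts := by
          gcongr with P'
          simpa using factorial_le (sub_le _ 1)
      _ ≤ (#P.parts + 0)! * (9 / 5) ^ #P.parts :=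
          Finpartition.sum_factorial_mul_pow_le zero_le_one (by norm_num)
            (by simpa using exp_inv_nine_fifths_le) P.parts 0
  calc _ ≤ ∑ P : Finpartition (range n), ((#P.parts + 0)! : ℝ) * (9 / 5) ^ #P.parts :=
        sum_le_sum fun P _ => inner P
    _ ≤ (#(range n) + 0)! * exp 1 ^ #(range n) :=
        Finpartition.sum_factorial_mul_pow_le (by norm_num) (exp_pos 1)
          nine_fifths_mul_exp_inv_exp_one_le _ 0
    _ ≤ n ! * exp (n + 1) := by
        rw [card_range, add_zero, ← exp_nat_mul, mul_one]
        gcongr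
        linarith

/-- The double sum over partitions `P` of `{0,…,n-1}` and partitions `P'` of the set
of blocks of `P` of `(|P'|-1)!` is bounded by `n! · e^(n+1)`. -/
theorem double_partition_sum_le
    (n : ℕ) (hn : 1 ≤ n) :
    (∑ P : Finpartition (Finset.range n),
       ∑ P' : Finpartition P.parts,
         ((P'.parts.card - 1).factorial : ℝ)) ≤
      (n.factorial : ℝ) * Real.exp (n + 1) :=
  double_partition_sum_le_general n
end

section
/- Let (S_B(t))_{t ∈ ℝ}, indexed by nonempty finite subsets B of a countable label set, be families of pairwise commuting invertible elements of a commutative monoid satisfying the group property S_B(t₁)S_B(t₂) = S_B(t₁+t₂) and S_B(0) = 1. Define, for a finite set Y and a sequence of initial data (g_B(0)) indexed by nonempty subsets, the evolved family g_Y(t) := Σ_{P partition of Y} A_{|P|}(t, blocks of P) ∏_{B∈P} g_B(0), where A_{|P|}(t, {X_1,…,X_k}) = Σ_{P' partition of {X_1,…,X_k}} (-1)^{|P'|-1}(|P'|-1)! ∏_{Z∈P'} S_{∪Z}(t). Then the solution operator satisfies the group property: applying the expansion with time t₂ to the data, then with time t₁, agrees with one application at time t₁+t₂; i.e. (A_{t₁}(A_{t₂}(g(0))))_Y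 = (A_{t₁+t₂}(g(0)))_Y for every finite Y. -/
/-!
Write `M(g)_Y = ∑_{P ⊢ Y} ∏_{B ∈ P} g_B` (`clusterSum`). Substituting one partition expansion
into another regroups it as a sum over partitions `ρ` of `Y` and partitions `π` of the set of
blocks of `ρ`. Since `(-1)^(k-1) (k-1)!` is the Möbius function of the partition lattice, the
cumulants satisfy `∑_{π ⊢ W} ∏_{b ∈ π} A(t, b) = S_{∪W}(t)`, hence
`M(evolve t g)_Y = S_Y(t) M(g)_Y`: in cluster form the evolution is multiplication by `S_Y(t)`.
The group property of `S` thus gives equal cluster sums for both sides, and `M` is injective on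
nonempty sets because the one-block partition contributes `g_Y` while every other term involves
only proper subsets of `Y`.
-/

open Finset

variable {α : Type*} [DecidableEq α] {R : Type*} [CommRing R]

/-- The cumulant of order `|blocks|` of the evolution operators `S` at time `t`:
`A(t, {X_1,…,X_k}) = ∑_{P' partition of {X_1,…,X_k}} (-1)^(|P'|-1)(|P'|-1)! ∏_{Z∈P'} S_{∪Z}(t)`. -/
noncomputable def cumulant (S : Finset α → ℝ → R) (t : ℝ)
    (blocks : Finset (Finset α)) : R :=
  ∑ P' : Finpartition blocks,
    (-1 : R) ^ (P'.parts.card - 1) * ((P'.parts.card - 1).factorial : R) *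
      ∏ Z ∈ P'.parts, S (Z.sup id) t

/-- The solution expansion of the nonlinear Liouville hierarchy:
`g_Y(t) = ∑_{P partition of Y} A_{|P|}(t, blocks of P) ∏_{B ∈ P} g_B(0)`. -/
noncomputable def evolve (S : Finset α → ℝ → R) (t : ℝ)
    (g : Finset α → R) (Y : Finset α) : R :=
  ∑ P : Finpartition Y, cumulant S t P.parts * ∏ B ∈ P.parts, g B

lemma sum_finpartition_empty {β M : Type*} [DecidableEq β] [AddCommMonoid M]
    (F : Finset (Finset β) → M) : ∑ P : Finpartition (∅ : Finset β), F P.parts = F ∅ :=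
  Fintype.sum_unique (ι := Finpartition (⊥ : Finset β)) _

namespace Finpartition

variable {β : Type*} [DecidableEq β] {Y s : Finset β}

lemma eq_indiscrete_of_mem_parts (hY : Y ≠ ⊥) {P : Finpartition Y} (h : Y ∈ P.parts) :
    P = indiscrete hY := by
  ext B
  rw [indiscrete_parts, mem_singleton]
  refine ⟨fun hB => ?_, fun hB => hB ▸ h⟩
  by_contra hBY
  exact P.ne_bot hB ((P.disjoint hB h hBY).eq_bot_of_le (P.le hB))

lemma eq_indiscrete_of_card_parts_le_one (hY : Y ≠ ⊥) {P : Finpartition Y}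
    (h : #P.parts ≤ 1) : P = indiscrete hY := by
  obtain ⟨B, hB⟩ := P.parts_nonempty hY
  have hBY : B = Y := (P.le hB).antisymm fun x hx => by
    obtain ⟨C, hC, hxC⟩ := P.exists_mem hx
    rwa [card_le_one.1 h C hC B hB] at hxC
  exact eq_indiscrete_of_mem_parts hY (hBY ▸ hB)

lemma prod_bind_parts {M : Type*} [CommMonoid M] (P : Finpartition Y)
    (q : ∀ B ∈ P.parts, Finpartition B) (G : Finset β → M) :
    ∏ C ∈ (P.bind q).parts, G C = ∏ B ∈ P.parts.attach, ∏ C ∈ (q B.1 B.2).parts, G C := by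
  rw [bind_parts]
  refine prod_biUnion fun B _ B' _ hBB' => disjoint_left.2 fun C hC hC' => ?_
  have hdisj := P.disjoint B.2 B'.2 (Subtype.coe_ne_coe.2 hBB')
  exact (q _ B.2).ne_bot hC (disjoint_self.1 (hdisj.mono ((q _ _).le hC) ((q _ _).le hC')))

lemma bind_le (P : Finpartition Y) (q : ∀ B ∈ P.parts, Finpartition B) : P.bind q ≤ P := by
  intro C hC
  obtain ⟨B, hB, hCB⟩ := mem_bind.1 hC
  exact ⟨B, hB, (q B hB).le hCB⟩

lemma filter_subset_bind_parts (P : Finpartition Y) (q : ∀ B ∈ P.parts, Finpartition B)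
    {B : Finset β} (hB : B ∈ P.parts) : (P.bind q).parts.filter (· ⊆ B) = (q B hB).parts := by
  ext C
  simp only [mem_filter, mem_bind]
  constructor
  · rintro ⟨⟨A, hA, hCA⟩, hCB⟩
    obtain ⟨x, hx⟩ := (q A hA).nonempty_of_mem_parts hCA
    obtain rfl : A = B := P.eq_of_mem_parts hA hB ((q A hA).le hCA hx) (hCB hx)
    exact hCA
  · exact fun hC => ⟨⟨B, hB, hC⟩, (q B hB).le hC⟩

lemma sup_filter_subset_of_le {ρ P : Finpartition Y} (h : ρ ≤ P) {B : Finset β}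
    (hB : B ∈ P.parts) : (ρ.parts.filter (· ⊆ B)).sup id = B := by
  refine (Finset.sup_le fun C hC => (mem_filter.1 hC).2).antisymm fun x hx => ?_
  obtain ⟨C, hC, hxC⟩ := ρ.exists_mem (P.le hB hx)
  obtain ⟨D, hD, hCD⟩ := h hC
  obtain rfl : D = B := P.eq_of_mem_parts hD hB (hCD hxC) hx
  exact mem_sup.2 ⟨C, mem_filter.2 ⟨hC, hCD⟩, hxC⟩

lemma filter_subset_sup_eq (ρ : Finpartition Y) {b : Finset (Finset β)} (hb : b ⊆ ρ.parts) :
    ρ.parts.filter (· ⊆ b.sup id) = b := by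
  ext C
  refine ⟨fun hC => ?_, fun hC => mem_filter.2 ⟨hb hC, le_sup (f := id) hC⟩⟩
  obtain ⟨hC, hCb⟩ := mem_filter.1 hC
  obtain ⟨x, hx⟩ := ρ.nonempty_of_mem_parts hC
  obtain ⟨C', hC', hxC'⟩ := mem_sup.1 (hCb hx)
  rwa [ρ.eq_of_mem_parts hC (hb hC') hx hxC']

def restrictToPart {ρ P : Finpartition Y} (h : ρ ≤ P) {B : Finset β} (hB : B ∈ P.parts) :
    Finpartition B :=
  ρ.ofSubset (filter_subset _ _) (sup_filter_subset_of_le h hB)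

lemma bind_restrictToPart {ρ P : Finpartition Y} (h : ρ ≤ P) :
    P.bind (fun _ hB => restrictToPart h hB) = ρ := by
  ext C
  rw [mem_bind]
  refine ⟨fun ⟨B, hB, hC⟩ => (mem_filter.1 hC).1, fun hC => ?_⟩
  obtain ⟨B, hB, hCB⟩ := h hC
  exact ⟨B, hB, mem_filter.2 ⟨hC, hCB⟩⟩

def coarsen (ρ : Finpartition Y) (π : Finpartition ρ.parts) : Finpartition Y where
  parts := π.parts.image (·.sup id)
  supIndep := by
    rw [supIndep_iff_pairwiseDisjoint]
    rintro _ hB₁ _ hB₂ hne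
    obtain ⟨b₁, hb₁, rfl⟩ := mem_image.1 hB₁
    obtain ⟨b₂, hb₂, rfl⟩ := mem_image.1 hB₂
    have hdisj := π.disjoint hb₁ hb₂ (ne_of_apply_ne _ hne)
    refine Finset.disjoint_sup_left.2 fun C₁ hC₁ => Finset.disjoint_sup_right.2 fun C₂ hC₂ => ?_
    exact ρ.disjoint (π.le hb₁ hC₁) (π.le hb₂ hC₂) fun h => disjoint_left.1 hdisj hC₁ (h ▸ hC₂)
  sup_parts := by
    rw [sup_image, Function.id_comp, ← sup_biUnion]
    exact (congrArg (sup · id) π.biUnion_parts).trans ρ.sup_parts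
  bot_notMem h := by
    obtain ⟨b, hb, hbot⟩ := mem_image.1 h
    obtain ⟨C, hC⟩ := π.nonempty_of_mem_parts hb
    exact ρ.ne_bot (π.le hb hC) (le_bot_iff.1 (hbot ▸ le_sup (f := id) hC))

lemma coarsen_parts (ρ : Finpartition Y) (π : Finpartition ρ.parts) :
    (ρ.coarsen π).parts = π.parts.image (·.sup id) := rfl

lemma le_coarsen (ρ : Finpartition Y) (π : Finpartition ρ.parts) : ρ ≤ ρ.coarsen π := by
  intro C hC
  obtain ⟨b, hb, hCb⟩ := π.exists_mem hC
  exact ⟨b.sup id, mem_image_of_mem _ hb, le_sup (f := id) hCb⟩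

def groupBy {ρ P : Finpartition Y} (h : ρ ≤ P) : Finpartition ρ.parts where
  parts := P.parts.image fun B => ρ.parts.filter (· ⊆ B)
  supIndep := by
    rw [supIndep_iff_pairwiseDisjoint]
    rintro _ hb₁ _ hb₂ hne
    obtain ⟨B₁, hB₁, rfl⟩ := mem_image.1 hb₁
    obtain ⟨B₂, hB₂, rfl⟩ := mem_image.1 hb₂
    have hdisj := P.disjoint hB₁ hB₂ (ne_of_apply_ne (fun B => ρ.parts.filter (· ⊆ B)) hne)
    refine disjoint_left.2 fun C hC₁ hC₂ => ρ.ne_bot (mem_filter.1 hC₁).1 ?_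
    exact disjoint_self.1 (hdisj.mono (mem_filter.1 hC₁).2 (mem_filter.1 hC₂).2)
  sup_parts := by
    refine (Finset.sup_le fun b hb => ?_).antisymm fun C hC => ?_
    · obtain ⟨B, -, rfl⟩ := mem_image.1 hb
      exact filter_subset _ _
    · obtain ⟨B, hB, hCB⟩ := h hC
      exact mem_sup.2 ⟨_, mem_image_of_mem _ hB, mem_filter.2 ⟨hC, hCB⟩⟩
  bot_notMem hbot := by
    obtain ⟨B, hB, hempty⟩ := mem_image.1 hbot
    apply P.ne_bot hB
    rw [← sup_filter_subset_of_le h hB, hempty]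
    rfl

lemma groupBy_parts {ρ P : Finpartition Y} (h : ρ ≤ P) :
    (groupBy h).parts = P.parts.image fun B => ρ.parts.filter (· ⊆ B) := rfl

lemma coarsen_groupBy {ρ P : Finpartition Y} (h : ρ ≤ P) : ρ.coarsen (groupBy h) = P := by
  ext B
  rw [coarsen_parts, groupBy_parts, image_image]
  constructor
  · rintro h'
    obtain ⟨B', hB', rfl⟩ := mem_image.1 h'
    rwa [Function.comp_apply, sup_filter_subset_of_le h hB']
  · exact fun hB => mem_image.2 ⟨B, hB, sup_filter_subset_of_le h hB⟩

lemma groupBy_coarsen (ρ : Finpartition Y) (π : Finpartition ρ.parts) :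
    groupBy (ρ.le_coarsen π) = π := by
  ext b
  rw [groupBy_parts, coarsen_parts, image_image]
  constructor
  · rintro h'
    obtain ⟨b', hb', rfl⟩ := mem_image.1 h'
    rwa [Function.comp_apply, filter_subset_sup_eq ρ (π.le hb')]
  · exact fun hb => mem_image.2 ⟨b, hb, filter_subset_sup_eq ρ (π.le hb)⟩

lemma prod_groupBy {M : Type*} [CommMonoid M] {ρ P : Finpartition Y} (h : ρ ≤ P)
    (F : Finset (Finset β) → M) :
    ∏ b ∈ (groupBy h).parts, F b = ∏ B ∈ P.parts, F (ρ.parts.filter (· ⊆ B)) := by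
  refine prod_image fun B₁ hB₁ B₂ hB₂ heq => ?_
  rw [← sup_filter_subset_of_le h hB₁, ← sup_filter_subset_of_le h hB₂]
  exact congrArg (sup · id) heq

lemma sigma_ext_parts {ι : Type*} {s : ι → Finset β}
    {x y : Σ i, Finpartition (s i)} (h₁ : x.1 = y.1) (h₂ : x.2.parts = y.2.parts) : x = y := by
  obtain ⟨i, P⟩ := x
  obtain ⟨j, Q⟩ := y
  obtain rfl : i = j := h₁
  exact congrArg (Sigma.mk i) (Finpartition.ext h₂)

lemma sigma_pi_ext_parts {Y : Finset β}
    {x y : Σ P : Finpartition Y, ∀ B ∈ P.parts, Finpartition B} (h₁ : x.1 = y.1)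
    (h₂ : ∀ B (hx : B ∈ x.1.parts) (hy : B ∈ y.1.parts), (x.2 B hx).parts = (y.2 B hy).parts) :
    x = y := by
  obtain ⟨P, q⟩ := x
  obtain ⟨P', q'⟩ := y
  obtain rfl : P = P' := h₁
  exact congrArg (Sigma.mk P) (funext₂ fun B hB => Finpartition.ext (h₂ B hB hB))

lemma avoid_parts_of_mem (P : Finpartition s) {A : Finset β} (hA : A ∈ P.parts) :
    (P.avoid A).parts = P.parts.erase A := by
  ext b
  rw [mem_avoid, mem_erase]
  constructor
  · rintro ⟨d, hd, hdA, rfl⟩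
    have hne : d ≠ A := fun h => hdA h.le
    have hdisj : Disjoint d A := P.disjoint hd hA hne
    rw [Finset.sdiff_eq_self_iff_disjoint.2 hdisj]
    exact ⟨hne, hd⟩
  · rintro ⟨hne, hb⟩
    have hdisj : Disjoint b A := P.disjoint hb hA hne
    exact ⟨b, hb, fun hle => P.ne_bot hb (hdisj.eq_bot_of_le hle),
      Finset.sdiff_eq_self_iff_disjoint.2 hdisj⟩

lemma sum_eq_sum_powerset_sum {M : Type*} [AddCommMonoid M] {a : β} (ha : a ∈ s)
    (F : Finset (Finset β) → M) :
    ∑ π : Finpartition s, F π.parts =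
      ∑ T ∈ (s.erase a).powerset, ∑ π : Finpartition (s.erase a \ T),
        F (insert (insert a T) π.parts) := by
  have hrest (π : Finpartition s) : s \ π.part a = s.erase a \ (π.part a).erase a := by
    have := π.mem_part ha
    ext x; simp only [mem_sdiff, mem_erase]; grind
  have hdisj {T} (hT : T ∈ (s.erase a).powerset) : Disjoint (s.erase a \ T) (insert a T) := by
    grind [disjoint_left]
  have hsup {T} (hT : T ∈ (s.erase a).powerset) : s.erase a \ T ⊔ insert a T = s := by
    rw [mem_powerset] at hT
    rw [sup_eq_union, union_insert, sdiff_union_of_subset hT, insert_erase ha]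
  have hsplit (π : Finpartition s) :
      insert (insert a ((π.part a).erase a)) (π.avoid (π.part a)).parts = π.parts := by
    rw [avoid_parts_of_mem π (π.part_mem.2 ha), insert_erase (π.mem_part ha),
      insert_erase (π.part_mem.2 ha)]
  rw [sum_sigma']
  refine sum_bij' (fun π _ => ⟨(π.part a).erase a, (π.avoid (π.part a)).copy (hrest π)⟩)
    (fun x hx => x.2.extend (insert_ne_empty a x.1) (hdisj (mem_sigma.1 hx).1)
      (hsup (mem_sigma.1 hx).1)) ?_ (fun _ _ => mem_univ _) ?_ ?_ ?_
  · exact fun π _ => mem_sigma.2 ⟨mem_powerset.2 (erase_subset_erase a (π.part_subset a)),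
      mem_univ _⟩
  · exact fun π _ => Finpartition.ext (hsplit π)
  · rintro ⟨T, π⟩ hx
    have haT : a ∉ T := fun h => notMem_erase a s (mem_powerset.1 (mem_sigma.1 hx).1 h)
    set J := π.extend (insert_ne_empty a T) (hdisj (mem_sigma.1 hx).1) (hsup (mem_sigma.1 hx).1)
    have hpart : J.part a = insert a T :=
      J.part_eq_of_mem (mem_insert_self _ _) (mem_insert_self a T)
    have hnotmem : insert a T ∉ π.parts := fun h =>
      (mem_sdiff.1 (π.le h (mem_insert_self a T))).1 |> notMem_erase a s
    refine sigma_ext_parts (s := fun T => s.erase a \ T) ?_ ?_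
    · exact (congrArg (erase · a) hpart).trans (erase_insert haT)
    · dsimp only
      rw [copy_parts, avoid_parts_of_mem J (J.part_mem.2 ha), hpart, extend_parts,
        erase_insert hnotmem]
  · exact fun π _ => congrArg F (hsplit π).symm

end Finpartition

noncomputable def clusterSum {β M : Type*} [DecidableEq β] [CommSemiring M] (g : Finset β → M)
    (Y : Finset β) : M :=
  ∑ P : Finpartition Y, ∏ B ∈ P.parts, g B

section ClusterSum

variable {β M : Type*} [DecidableEq β] [CommSemiring M]

open Finpartition in
lemma clusterSum_sum_mul_prod (F : Finset (Finset β) → M) (G : Finset β → M) (Y : Finset β) :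
    clusterSum (fun B => ∑ Q : Finpartition B, F Q.parts * ∏ C ∈ Q.parts, G C) Y =
      ∑ ρ : Finpartition Y, clusterSum F ρ.parts * ∏ C ∈ ρ.parts, G C := by
  simp only [clusterSum, prod_sum, sum_mul]
  rw [sum_sigma', sum_sigma']
  refine sum_bij' (fun x _ => ⟨x.1.bind x.2, groupBy (x.1.bind_le x.2)⟩)
    (fun y _ => ⟨y.1.coarsen y.2, fun _ hB => restrictToPart (y.1.le_coarsen y.2) hB⟩)
    (fun _ _ => mem_sigma.2 ⟨mem_univ _, mem_univ _⟩)
    (fun _ _ => mem_sigma.2 ⟨mem_univ _, mem_pi.2 fun _ _ => mem_univ _⟩) ?_ ?_ ?_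
  · rintro ⟨P, q⟩ -
    refine sigma_pi_ext_parts (coarsen_groupBy (P.bind_le q)) fun B _ hB => ?_
    exact filter_subset_bind_parts P q hB
  · rintro ⟨ρ, π⟩ -
    have hbind := bind_restrictToPart (ρ.le_coarsen π)
    refine sigma_ext_parts (s := fun ρ : Finpartition Y => ρ.parts) hbind ?_
    dsimp only
    rw [groupBy_parts, congrArg parts hbind, ← groupBy_parts (ρ.le_coarsen π), groupBy_coarsen]
  · rintro ⟨P, q⟩ -
    dsimp only
    rw [prod_mul_distrib, prod_groupBy (P.bind_le q), prod_bind_parts, ← prod_attach P.parts]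
    congr 1
    refine prod_congr rfl fun B _ => ?_
    rw [filter_subset_bind_parts P q B.2]

lemma eq_of_clusterSum_eq [IsRightCancelAdd M] {f g : Finset β → M}
    (h : ∀ Y : Finset β, Y.Nonempty → clusterSum f Y = clusterSum g Y) {Y : Finset β}
    (hY : Y.Nonempty) : f Y = g Y := by
  induction Y using Finset.strongInduction with
  | H Y ih =>
  have hY' : Y ≠ ⊥ := hY.ne_empty
  have hsplit (u : Finset β → M) : clusterSum u Y =
      u Y + ∑ P ∈ univ.erase (Finpartition.indiscrete hY'), ∏ B ∈ P.parts, u B := by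
    rw [clusterSum, ← add_sum_erase _ _ (mem_univ (Finpartition.indiscrete hY')),
      Finpartition.indiscrete_parts, prod_singleton]
  have hrest : ∑ P ∈ univ.erase (Finpartition.indiscrete hY'), ∏ B ∈ P.parts, f B =
      ∑ P ∈ univ.erase (Finpartition.indiscrete hY'), ∏ B ∈ P.parts, g B := by
    refine sum_congr rfl fun P hP => prod_congr rfl fun B hB =>
      ih B ?_ (P.nonempty_of_mem_parts hB)
    exact (P.le hB).ssubset_of_ne fun hBY =>
      (mem_erase.1 hP).1 (Finpartition.eq_indiscrete_of_mem_parts hY' (hBY ▸ hB))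
  have := h Y hY
  rw [hsplit, hsplit, hrest] at this
  exact add_right_cancel this

end ClusterSum

/-- The Möbius function `μ(0̂, 1̂)` of the lattice of partitions of a `k`-element set. -/
def partitionMobius (R : Type*) [Ring R] (k : ℕ) : R := (-1) ^ (k - 1) * (k - 1).factorial

lemma sum_range_choose_partitionMobius (m : ℕ) :
    ∑ k ∈ range (m + 1), m.choose k • (partitionMobius R (k + 1) * if m - k ≤ 1 then 1 else 0) =
      if m + 1 ≤ 1 then 1 else 0 := by
  rcases m with _ | n
  · simp [partitionMobius]
  rw [sum_range_succ, sum_range_succ, sum_eq_zero fun k hk => by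
    rw [if_neg (by rw [mem_range] at hk; omega), mul_zero, smul_zero]]
  simp only [partitionMobius, Nat.choose_self, Nat.choose_succ_self_right, Nat.add_sub_cancel,
    Nat.sub_self, zero_le, if_true, if_neg (show ¬ n + 1 + 1 ≤ 1 by omega),
    show n + 1 - n ≤ 1 by omega, Nat.factorial_succ, pow_succ, nsmul_eq_mul]
  push_cast
  ring

lemma clusterSum_partitionMobius {β : Type*} [DecidableEq β] (s : Finset β) :
    clusterSum (fun b => partitionMobius R #b) s = if #s ≤ 1 then 1 else 0 := by
  induction s using Finset.strongInduction with
  | H s ih =>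
  rcases s.eq_empty_or_nonempty with rfl | ⟨a, ha⟩
  · rw [clusterSum, sum_finpartition_empty fun p => ∏ b ∈ p, partitionMobius R #b]
    simp
  have hterm (T) (hT : T ∈ (s.erase a).powerset) :
      ∑ π : Finpartition (s.erase a \ T), ∏ b ∈ insert (insert a T) π.parts, partitionMobius R #b
        = partitionMobius R (#T + 1) * if #(s.erase a) - #T ≤ 1 then 1 else 0 := by
    rw [mem_powerset] at hT
    have haT : a ∉ T := fun h => notMem_erase a s (hT h)
    have hnotmem (π : Finpartition (s.erase a \ T)) : insert a T ∉ π.parts := fun h =>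
      notMem_erase a s (mem_sdiff.1 (π.le h (mem_insert_self a T))).1
    simp_rw [prod_insert (hnotmem _), card_insert_of_notMem haT, ← mul_sum]
    rw [← card_sdiff_of_subset hT]
    exact congrArg _ (ih _ (sdiff_subset.trans_ssubset (erase_ssubset ha)))
  rw [clusterSum,
    Finpartition.sum_eq_sum_powerset_sum ha fun p => ∏ b ∈ p, partitionMobius R #b,
    sum_congr rfl hterm, sum_powerset_apply_card (fun k => partitionMobius R (k + 1) *
      if #(s.erase a) - k ≤ 1 then 1 else 0), sum_range_choose_partitionMobius,
    card_erase_add_one ha]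

lemma clusterSum_cumulant (S : Finset α → ℝ → R) (t : ℝ) {W : Finset (Finset α)}
    (hW : W.Nonempty) : clusterSum (cumulant S t) W = S (W.sup id) t := by
  rw [show clusterSum (cumulant S t) W = _ from
    clusterSum_sum_mul_prod (fun Q => partitionMobius R #Q) (fun C => S (C.sup id) t) W,
    Fintype.sum_eq_single (Finpartition.indiscrete hW.ne_empty) fun ρ hρ => ?_]
  · simp [clusterSum_partitionMobius]
  · rw [clusterSum_partitionMobius,
      if_neg fun h => hρ (Finpartition.eq_indiscrete_of_card_parts_le_one _ h), zero_mul]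

lemma clusterSum_evolve (S : Finset α → ℝ → R) (t : ℝ) (g : Finset α → R) {Y : Finset α}
    (hY : Y.Nonempty) : clusterSum (evolve S t g) Y = S Y t * clusterSum g Y := by
  rw [show clusterSum (evolve S t g) Y = _ from clusterSum_sum_mul_prod (cumulant S t) g Y,
    clusterSum, mul_sum]
  refine sum_congr rfl fun ρ _ => ?_
  rw [clusterSum_cumulant S t (ρ.parts_nonempty hY.ne_empty), ρ.sup_parts]

lemma evolve_empty (S : Finset α → ℝ → R) (t : ℝ) (g : Finset α → R) : evolve S t g ∅ = 1 := by
  rw [evolve, sum_finpartition_empty fun p => cumulant S t p * ∏ B ∈ p, g B, cumulant,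
    sum_finpartition_empty fun p => (-1 : R) ^ (#p - 1) * ((#p - 1).factorial : R) *
      ∏ Z ∈ p, S (Z.sup id) t]
  simp

theorem evolve_group_property_general
    (S : Finset α → ℝ → R)
    (hgrp : ∀ (B : Finset α) (t₁ t₂ : ℝ), S B t₁ * S B t₂ = S B (t₁ + t₂))
    (g₀ : Finset α → R) (t₁ t₂ : ℝ) :
    ∀ Y : Finset α,
      evolve S t₁ (fun B => evolve S t₂ g₀ B) Y = evolve S (t₁ + t₂) g₀ Y := by
  intro Y
  rcases Y.eq_empty_or_nonempty with rfl | hY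
  · rw [evolve_empty, evolve_empty]
  refine eq_of_clusterSum_eq (fun Z hZ => ?_) hY
  rw [clusterSum_evolve S _ _ hZ, clusterSum_evolve S _ _ hZ, clusterSum_evolve S _ _ hZ,
    ← mul_assoc, hgrp]

/-- Group property of the solution operator of the nonlinear Liouville hierarchy:
applying the cumulant expansion at time `t₂` and then at time `t₁` agrees with a
single application at time `t₁ + t₂`. -/
theorem evolve_group_property
    (S : Finset α → ℝ → R)
    (hgrp : ∀ (B : Finset α) (t₁ t₂ : ℝ), S B t₁ * S B t₂ = S B (t₁ + t₂))
    (hone : ∀ B : Finset α, S B 0 = 1)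
    (hinv : ∀ (B : Finset α) (t : ℝ), IsUnit (S B t))
    (g₀ : Finset α → R) (t₁ t₂ : ℝ) :
    ∀ Y : Finset α,
      evolve S t₁ (fun B => evolve S t₂ g₀ B) Y = evolve S (t₁ + t₂) g₀ Y :=
  evolve_group_property_general S hgrp g₀ t₁ t₂
end

section
/- Let Y be a finite set, |Y| = n, and let g_B(0) ∈ L¹ for each nonempty B ⊆ Y, with each S_B(-t) an isometry of L¹ (composition with a measure-preserving map). Then the cumulant expansion g_Y(t) = Σ_{P partition of Y} A_{|P|}(t, blocks of P) ∏_{B∈P} g_B(0) satisfies ‖g_Y(t)‖₁ ≤ n! e^{n+1} Σ_{P partition of Y} ∏_{B∈P} ‖g_B(0)‖₁; in particular g_Y(t) ∈ L¹ for every t ∈ ℝ. -/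
/-!
By the triangle inequality and `hiso`, the term indexed by `(P, P')` contributes at most
`(|P'| - 1)! ∏_{B ∈ P} ‖g_B(0)‖`, so it suffices to bound `∑_{P'} (|P'| - 1)!` over the
partitions `P'` of a `k`-set, `k ≤ n`. Labelling the blocks of `P'` injectively by `Fin k` and
sending each point to the label of its block is an injection, so `∑_{P'} |P'|! ≤ k ^ k`, and
`k ^ k ≤ k! e ^ k` is one term of the exponential series.
-/

open Finset

namespace Finpartition

variable {β : Type*} [DecidableEq β] {s : Finset β}

lemma parts_eq_image_part (P : Finpartition s) : P.parts = s.image P.part := by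
  ext t
  refine ⟨fun ht => ?_, ?_⟩
  · obtain ⟨a, ha, rfl⟩ := P.part_surjOn ht
    exact mem_image_of_mem _ ha
  · intro ht
    obtain ⟨a, ha, rfl⟩ := mem_image.1 ht
    exact P.part_mem.2 ha

lemma part_eq_part_of_labels_eq {γ : Type*} {P Q : Finpartition s}
    (f : P.parts ↪ γ) (g : Q.parts ↪ γ)
    (hfg : ∀ a (ha : a ∈ s), f ⟨P.part a, P.part_mem.2 ha⟩ = g ⟨Q.part a, Q.part_mem.2 ha⟩)
    {a : β} (ha : a ∈ s) : P.part a = Q.part a := by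
  ext b
  by_cases hb : b ∈ s
  · rw [P.mem_part_iff_part_eq_part hb ha, Q.mem_part_iff_part_eq_part hb ha,
      ← Subtype.mk.injEq _ (P.part_mem.2 hb) _ (P.part_mem.2 ha), ← f.injective.eq_iff,
      hfg b hb, hfg a ha, g.injective.eq_iff, Subtype.mk.injEq]
  · exact iff_of_false (fun h => hb (P.part_subset a h)) (fun h => hb (Q.part_subset a h))

lemma sum_factorial_card_parts_le (s : Finset β) :
    ∑ P : Finpartition s, P.parts.card.factorial ≤ s.card ^ s.card := by
  have hlabels : ∀ P : Finpartition s,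
      P.parts.card.factorial ≤ Fintype.card (P.parts ↪ Fin s.card) := fun P => by
    rw [Fintype.card_embedding_eq, Fintype.card_coe, Fintype.card_fin,
      ← Nat.descFactorial_self]
    exact Nat.descFactorial_le _ P.card_parts_le_card
  have hinj : Function.Injective fun x : Σ P : Finpartition s, P.parts ↪ Fin s.card =>
      fun a : s => x.2 ⟨x.1.part a, x.1.part_mem.2 a.2⟩ := by
    rintro ⟨P, f⟩ ⟨Q, g⟩ hfg
    have hlabel a (ha : a ∈ s) := congrFun hfg ⟨a, ha⟩
    obtain rfl : P = Q := Finpartition.ext <| by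
      rw [P.parts_eq_image_part, Q.parts_eq_image_part]
      exact image_congr fun a ha => part_eq_part_of_labels_eq f g hlabel ha
    obtain rfl : f = g := by
      ext ⟨t, ht⟩
      obtain ⟨a, ha, rfl⟩ := P.part_surjOn ht
      exact congrArg Fin.val (hlabel a ha)
    rfl
  calc ∑ P : Finpartition s, P.parts.card.factorial
      ≤ ∑ P : Finpartition s, Fintype.card (P.parts ↪ Fin s.card) :=
        sum_le_sum fun P _ => hlabels P
    _ = Fintype.card (Σ P : Finpartition s, P.parts ↪ Fin s.card) := Fintype.card_sigma.symm
    _ ≤ Fintype.card (s → Fin s.card) := Fintype.card_le_of_injective _ hinj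
    _ = s.card ^ s.card := by simp

lemma sum_factorial_card_parts_sub_one_le {n : ℕ} (hs : s.card ≤ n) :
    ∑ P : Finpartition s, ((P.parts.card - 1).factorial : ℝ) ≤ n.factorial * Real.exp (n + 1) := by
  set k := s.card
  have hpow : (k : ℝ) ^ k ≤ k.factorial * Real.exp k := by
    have := Real.pow_div_factorial_le_exp (k : ℝ) (Nat.cast_nonneg k) k
    rwa [div_le_iff₀ (by positivity), mul_comm] at this
  calc ∑ P : Finpartition s, ((P.parts.card - 1).factorial : ℝ)
      ≤ ∑ P : Finpartition s, (P.parts.card.factorial : ℝ) :=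
        sum_le_sum fun P _ => by exact_mod_cast Nat.factorial_le (Nat.sub_le _ _)
    _ ≤ (k : ℝ) ^ k := by exact_mod_cast sum_factorial_card_parts_le s
    _ ≤ k.factorial * Real.exp k := hpow
    _ ≤ n.factorial * Real.exp (n + 1) := by
        gcongr
        exact (Nat.cast_le.2 hs).trans (le_add_of_nonneg_right zero_le_one)

end Finpartition

lemma norm_neg_one_pow_mul_factorial_zsmul_le {A : Type*} [SeminormedAddCommGroup A]
    (k : ℕ) (x : A) :
    ‖((-1 : ℤ) ^ k * (k.factorial : ℤ)) • x‖ ≤ k.factorial * ‖x‖ := by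
  refine (norm_zsmul_le _ _).trans_eq ?_
  simp

/-- `L¹`-estimate for the cumulant expansion.  The commuting evolution operators and
the data live in a normed commutative ring (e.g. an algebra of functions with the
`L¹`-norm on each tensor factor); the isometry property of `S_B(-t)` and the tensor
multiplicativity of the `L¹`-norm are encoded in the hypothesis `hiso`.  Then the
cumulant expansion `g_Y(t)` is norm-bounded by
`n! e^(n+1) ∑_{P partition of Y} ∏_{B ∈ P} ‖g_B(0)‖` where `n = |Y|`. -/
theorem cumulant_expansion_norm_bound
    {α : Type*} [DecidableEq α] {A : Type*} [NormedCommRing A]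
    (Y : Finset α) (S : Finset α → A) (g₀ : Finset α → A)
    (hiso : ∀ (P : Finpartition Y) (P' : Finpartition P.parts),
      ‖(∏ Z ∈ P'.parts, S (Z.sup id)) * ∏ B ∈ P.parts, g₀ B‖ =
        ∏ B ∈ P.parts, ‖g₀ B‖) :
    ‖∑ P : Finpartition Y,
        ∑ P' : Finpartition P.parts,
          ((-1 : ℤ) ^ (P'.parts.card - 1) * ((P'.parts.card - 1).factorial : ℤ)) •
            ((∏ Z ∈ P'.parts, S (Z.sup id)) * ∏ B ∈ P.parts, g₀ B)‖ ≤
      (Y.card.factorial : ℝ) * Real.exp (Y.card + 1) *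
        ∑ P : Finpartition Y, ∏ B ∈ P.parts, ‖g₀ B‖ := by
  rw [mul_sum]
  refine (norm_sum_le _ _).trans (sum_le_sum fun P _ => ?_)
  calc _ ≤ ∑ P' : Finpartition P.parts, ((P'.parts.card - 1).factorial : ℝ) *
          ∏ B ∈ P.parts, ‖g₀ B‖ := by
        refine (norm_sum_le _ _).trans (sum_le_sum fun P' _ => ?_)
        rw [← hiso P P']
        exact norm_neg_one_pow_mul_factorial_zsmul_le _ _
    _ ≤ _ := by
        rw [← sum_mul]
        gcongr
        exact Finpartition.sum_factorial_card_parts_sub_one_le P.card_parts_le_card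
end
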